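/- Let a > 0, s > 0, p ∈ [1,2], L₂ > 0, C_Λ ≥ 1, and ϱ, δ > 0 with δ < ϱ L₂. Consider, for each j ∈ ℕ₀, a block sequence f_j supported on level j with all |Λ_j| ≤ C_Λ 2^{jd} coordinates equal to β := C_Λ^{−1} 2^{−jd/2} min{2^{−js}ϱ, L₂^{−1} 2^{ja}δ}. Then ‖f_j‖_{s,p,q} ≤ ϱ and ‖f_j‖_{−a,2,1} ≤ δ/L₂, while ‖f_j‖_{0,p,1} ≥ C_Λ^{−1} min{2^{−js}ϱ, L₂^{−1} 2^{ja}δ}. Consequently sup_j ‖f_j‖_{0,p,1} ≥ C_Λ^{−1} 2^{−s} L₂^{−s/(s+a)} ϱ^{a/(s+a)} δ^{s/(s+a)}. -/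

import Mathlib

/-!
A single-level sequence has a single nonzero Besov term, namely
`2^{jt} (|Λ_j| / 2^{jd})^{1/p} C_Λ⁻¹ m_j` with `m_j` the minimum in `β_j`, and the density
`|Λ_j| / 2^{jd}` lies in `[1, C_Λ]`; hence every norm of `f_j` lies between `2^{jt} C_Λ⁻¹ m_j`
and `2^{jt} m_j`. For the supremum: the two terms of `m_j`, as functions of `T = 2^j`, cross at
`T = (ϱ L₂ / δ)^{1/(s+a)} ≥ 1`, where both equal `L₂^{-s/(s+a)} ϱ^{a/(s+a)} δ^{s/(s+a)}`, and the
dyadic `2^j ∈ [T, 2T]` loses at most the factor `2^{-s}`.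
-/

open Real ENNReal

/-- ℓ^p norm on a finite block for p ∈ [1,∞], valued in ℝ≥0∞. -/
noncomputable def blockNormE {Λ : Type*} [Fintype Λ] (p : ℝ≥0∞) (v : Λ → ℝ) : ℝ≥0∞ :=
  if p = ∞ then Finset.univ.sup (fun k => (‖v k‖₊ : ℝ≥0∞))
  else (∑ k, (‖v k‖₊ : ℝ≥0∞) ^ p.toReal) ^ (1 / p.toReal)

/-- ℓ^q norm of a sequence in ℝ≥0∞, q ∈ [1,∞]. -/
noncomputable def lqNormE (q : ℝ≥0∞) (x : ℕ → ℝ≥0∞) : ℝ≥0∞ :=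
  if q = ∞ then ⨆ j, x j else (∑' j, x j ^ q.toReal) ^ (1 / q.toReal)

/-- weight 2^{js} 2^{jd(1/2 − 1/p)} (with the convention 1/∞ = 0). -/
noncomputable def wtE (d : ℕ) (s : ℝ) (p : ℝ≥0∞) (j : ℕ) : ℝ≥0∞ :=
  ENNReal.ofReal ((2:ℝ) ^ ((j:ℝ) * s) * (2:ℝ) ^ ((j:ℝ) * d * (1 / 2 - 1 / p.toReal)))

/-- sequence Besov norm ‖z‖_{b^s_{p,q}}. -/
noncomputable def besovNormE {Λ : ℕ → Type*} [∀ j, Fintype (Λ j)]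
    (d : ℕ) (s : ℝ) (p q : ℝ≥0∞) (z : ∀ j, Λ j → ℝ) : ℝ≥0∞ :=
  lqNormE q (fun j => wtE d s p j * blockNormE p (z j))

lemma lqNormE_eq_of_forall_ne_eq_zero {q : ℝ≥0∞} (hq : q ≠ 0) {x : ℕ → ℝ≥0∞} {j : ℕ}
    (hx : ∀ n, n ≠ j → x n = 0) : lqNormE q x = x j := by
  unfold lqNormE
  split_ifs with hq'
  · refine le_antisymm (iSup_le fun n => ?_) (le_iSup x j)
    rcases eq_or_ne n j with rfl | hn
    · exact le_rfl
    · simp [hx n hn]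
  · have hr : 0 < q.toReal := ENNReal.toReal_pos hq hq'
    rw [tsum_eq_single j fun n hn => by rw [hx n hn, ENNReal.zero_rpow_of_pos hr],
      ← ENNReal.rpow_mul, mul_one_div_cancel hr.ne', ENNReal.rpow_one]

lemma blockNormE_const {Λ : Type*} [Fintype Λ] {p : ℝ≥0∞} (hp0 : p ≠ 0) (hp : p ≠ ∞)
    (c : ℝ) :
    blockNormE p (fun _ : Λ => c) = (Fintype.card Λ : ℝ≥0∞) ^ (1 / p.toReal) * ‖c‖ₑ := by
  have hr : 0 < p.toReal := ENNReal.toReal_pos hp0 hp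
  rw [blockNormE, if_neg hp, Finset.sum_const, Finset.card_univ, nsmul_eq_mul,
    ENNReal.mul_rpow_of_nonneg _ _ (by positivity), ← ENNReal.rpow_mul,
    mul_one_div_cancel hr.ne', ENNReal.rpow_one, enorm_eq_nnnorm]

lemma two_rpow_mul_rpow_mul_eq_rpow_div {N : ℝ} (hN : 0 ≤ N) (x r b : ℝ) :
    (2:ℝ) ^ (x * (1 / 2 - 1 / r)) * (N ^ (1 / r) * ((2:ℝ) ^ (-x / 2) * b)) =
      (N / (2:ℝ) ^ x) ^ (1 / r) * b := by
  have hsplit :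
      (2:ℝ) ^ (x * (1 / 2 - 1 / r)) * (2:ℝ) ^ (-x / 2) = (((2:ℝ) ^ x) ^ (1 / r))⁻¹ := by
    rw [← Real.rpow_add two_pos, ← Real.rpow_mul zero_le_two, ← Real.rpow_neg zero_le_two]
    ring_nf
  rw [Real.div_rpow hN (by positivity), div_eq_mul_inv (_ ^ _), ← hsplit]
  ring

section SingleLevel

variable {Λ : ℕ → Type*} [∀ j, Fintype (Λ j)] {d : ℕ} {t : ℝ} {p q : ℝ≥0∞} {j : ℕ} {b : ℝ}
  {z : ∀ n, Λ n → ℝ}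

lemma besovNormE_eq_of_level (hp0 : p ≠ 0) (hp : p ≠ ∞) (hq : q ≠ 0) {c : ℝ}
    (hz : ∀ n (k : Λ n), z n k = if n = j then c else 0) :
    besovNormE d t p q z =
      wtE d t p j * ((Fintype.card (Λ j) : ℝ≥0∞) ^ (1 / p.toReal) * ‖c‖ₑ) := by
  have hzn : ∀ n, z n = fun _ => if n = j then c else 0 := fun n => funext (hz n)
  rw [besovNormE, lqNormE_eq_of_forall_ne_eq_zero hq fun n hn => ?_, hzn, if_pos rfl,
    blockNormE_const hp0 hp]
  rw [hzn, if_neg hn, blockNormE_const hp0 hp]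
  simp

lemma besovNormE_eq_ofReal_of_level (hp0 : p ≠ 0) (hp : p ≠ ∞) (hq : q ≠ 0) (hb : 0 ≤ b)
    (hz : ∀ n (k : Λ n), z n k = if n = j then (2:ℝ) ^ (-((j:ℝ) * d) / 2) * b else 0) :
    besovNormE d t p q z = ENNReal.ofReal ((2:ℝ) ^ ((j:ℝ) * t) *
      ((Fintype.card (Λ j) : ℝ) / (2:ℝ) ^ ((j:ℝ) * d)) ^ (1 / p.toReal) * b) := by
  rw [besovNormE_eq_of_level hp0 hp hq hz, wtE, ← ENNReal.ofReal_natCast,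
    ENNReal.ofReal_rpow_of_nonneg (Nat.cast_nonneg _) (by positivity),
    Real.enorm_eq_ofReal (by positivity), ← ENNReal.ofReal_mul (by positivity),
    ← ENNReal.ofReal_mul (by positivity), mul_assoc,
    two_rpow_mul_rpow_mul_eq_rpow_div (Nat.cast_nonneg _), mul_assoc]

lemma one_le_card_div_two_rpow (hN : 2 ^ (j * d) ≤ Fintype.card (Λ j)) :
    1 ≤ (Fintype.card (Λ j) : ℝ) / (2:ℝ) ^ ((j:ℝ) * d) := by
  rw [one_le_div (by positivity), ← Nat.cast_mul, Real.rpow_natCast]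
  exact_mod_cast hN

lemma le_besovNormE_of_level (hp0 : p ≠ 0) (hp : p ≠ ∞) (hq : q ≠ 0)
    (hN : 2 ^ (j * d) ≤ Fintype.card (Λ j)) (hb : 0 ≤ b)
    (hz : ∀ n (k : Λ n), z n k = if n = j then (2:ℝ) ^ (-((j:ℝ) * d) / 2) * b else 0) :
    ENNReal.ofReal ((2:ℝ) ^ ((j:ℝ) * t) * b) ≤ besovNormE d t p q z := by
  rw [besovNormE_eq_ofReal_of_level hp0 hp hq hb hz]
  gcongr
  exact le_mul_of_one_le_right (by positivity)
    (Real.one_le_rpow (one_le_card_div_two_rpow hN) (by positivity))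

lemma besovNormE_le_of_level (hp1 : 1 ≤ p) (hp : p ≠ ∞) (hq : q ≠ 0) {C : ℝ}
    (hN₁ : 2 ^ (j * d) ≤ Fintype.card (Λ j))
    (hN₂ : (Fintype.card (Λ j) : ℝ) ≤ C * 2 ^ (j * d)) (hb : 0 ≤ b)
    (hz : ∀ n (k : Λ n), z n k = if n = j then (2:ℝ) ^ (-((j:ℝ) * d) / 2) * b else 0) :
    besovNormE d t p q z ≤ ENNReal.ofReal ((2:ℝ) ^ ((j:ℝ) * t) * (C * b)) := by
  have hr : 1 ≤ p.toReal := by simpa using ENNReal.toReal_mono hp hp1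
  have hρC : (Fintype.card (Λ j) : ℝ) / (2:ℝ) ^ ((j:ℝ) * d) ≤ C := by
    rwa [div_le_iff₀ (by positivity), ← Nat.cast_mul, Real.rpow_natCast]
  have hρr : ((Fintype.card (Λ j) : ℝ) / (2:ℝ) ^ ((j:ℝ) * d)) ^ (1 / p.toReal) ≤ C :=
    (Real.rpow_le_self_of_one_le (one_le_card_div_two_rpow hN₁)
      (div_le_one_of_le₀ hr (by positivity))).trans hρC
  rw [besovNormE_eq_ofReal_of_level (by positivity) hp hq hb hz, mul_assoc]
  gcongr

end SingleLevel

section Crossover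

variable {s a L ϱ δ : ℝ}

lemma crossover_eq (hsa : 0 < s + a) (hL : 0 < L) (hϱ : 0 < ϱ) (hδ : 0 < δ) :
    ((ϱ * L / δ) ^ (1 / (s + a))) ^ (-s) * ϱ =
        L ^ (-(s / (s + a))) * ϱ ^ (a / (s + a)) * δ ^ (s / (s + a)) ∧
      L⁻¹ * ((ϱ * L / δ) ^ (1 / (s + a))) ^ a * δ =
        L ^ (-(s / (s + a))) * ϱ ^ (a / (s + a)) * δ ^ (s / (s + a)) := by
  have hu : 0 < ϱ * L / δ := by positivity
  have hlogK : Real.log (L ^ (-(s / (s + a))) * ϱ ^ (a / (s + a)) * δ ^ (s / (s + a))) =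
      -(s / (s + a)) * Real.log L + a / (s + a) * Real.log ϱ + s / (s + a) * Real.log δ := by
    rw [Real.log_mul (by positivity) (by positivity), Real.log_mul (by positivity) (by positivity),
      Real.log_rpow hL, Real.log_rpow hϱ, Real.log_rpow hδ]
  have hlogT : Real.log ((ϱ * L / δ) ^ (1 / (s + a))) =
      (Real.log ϱ + Real.log L - Real.log δ) / (s + a) := by
    rw [Real.log_rpow hu, Real.log_div (by positivity) hδ.ne', Real.log_mul hϱ.ne' hL.ne']
    ring
  constructor
  · refine Real.log_injOn_pos (Set.mem_Ioi.2 (by positivity)) (Set.mem_Ioi.2 (by positivity)) ?_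
    rw [hlogK, Real.log_mul (by positivity) hϱ.ne', Real.log_rpow (by positivity), hlogT]
    field_simp
    ring
  · refine Real.log_injOn_pos (Set.mem_Ioi.2 (by positivity)) (Set.mem_Ioi.2 (by positivity)) ?_
    rw [hlogK, Real.log_mul (by positivity) hδ.ne', Real.log_mul (by positivity) (by positivity),
      Real.log_inv, Real.log_rpow (by positivity), hlogT]
    field_simp
    ring

lemma exists_le_min_two_rpow (hs : 0 < s) (ha : 0 ≤ a) (hL : 0 < L) (hϱ : 0 < ϱ) (hδ : 0 < δ)
    (hδϱ : δ ≤ ϱ * L) :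
    ∃ j : ℕ,
      (2:ℝ) ^ (-s) * (L ^ (-(s / (s + a))) * ϱ ^ (a / (s + a)) * δ ^ (s / (s + a))) ≤
        min ((2:ℝ) ^ (-(j:ℝ) * s) * ϱ) (L⁻¹ * (2:ℝ) ^ ((j:ℝ) * a) * δ) := by
  have hsa : 0 < s + a := by linarith
  set T := (ϱ * L / δ) ^ (1 / (s + a))
  obtain ⟨hTs, hTa⟩ := crossover_eq hsa hL hϱ hδ
  have hT : 1 ≤ T := Real.one_le_rpow ((one_le_div hδ).2 hδϱ) (by positivity)
  obtain ⟨n, hnT, hTn⟩ := exists_nat_pow_near hT one_lt_two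
  have hpow : ∀ x : ℝ, ((2:ℝ) ^ (n + 1)) ^ x = (2:ℝ) ^ (((n + 1 : ℕ) : ℝ) * x) :=
    fun x => by rw [← Real.rpow_natCast, ← Real.rpow_mul zero_le_two]
  refine ⟨n + 1, le_min ?_ ?_⟩
  · calc (2:ℝ) ^ (-s) * (L ^ (-(s / (s + a))) * ϱ ^ (a / (s + a)) * δ ^ (s / (s + a)))
        = (2 * T) ^ (-s) * ϱ := by
          rw [← hTs, Real.mul_rpow zero_le_two (by positivity), mul_assoc]
      _ ≤ ((2:ℝ) ^ (n + 1)) ^ (-s) * ϱ := by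
          gcongr ?_ * _
          exact Real.rpow_le_rpow_of_nonpos (by positivity) (by rw [pow_succ']; linarith)
            (by linarith)
      _ = (2:ℝ) ^ (-((n + 1 : ℕ) : ℝ) * s) * ϱ := by rw [hpow, neg_mul_comm]
  · calc (2:ℝ) ^ (-s) * (L ^ (-(s / (s + a))) * ϱ ^ (a / (s + a)) * δ ^ (s / (s + a)))
        ≤ L⁻¹ * T ^ a * δ := by
          rw [← hTa]
          exact mul_le_of_le_one_left (by positivity)
            (Real.rpow_le_one_of_one_le_of_nonpos one_le_two (by linarith))
      _ ≤ L⁻¹ * ((2:ℝ) ^ (n + 1)) ^ a * δ := by gcongr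
      _ = L⁻¹ * (2:ℝ) ^ (((n + 1 : ℕ) : ℝ) * a) * δ := by rw [hpow]

lemma two_rpow_mul_min_le_left (u s x y : ℝ) :
    (2:ℝ) ^ (u * s) * min ((2:ℝ) ^ (-u * s) * x) y ≤ x :=
  calc (2:ℝ) ^ (u * s) * min ((2:ℝ) ^ (-u * s) * x) y
      ≤ (2:ℝ) ^ (u * s) * ((2:ℝ) ^ (-u * s) * x) := by gcongr; exact min_le_left _ _
    _ = x := by
      rw [← mul_assoc, ← Real.rpow_add two_pos, neg_mul, add_neg_cancel, Real.rpow_zero,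
        one_mul]

lemma two_rpow_mul_neg_mul_min_le_right (u a x L δ : ℝ) :
    (2:ℝ) ^ (u * -a) * min x (L⁻¹ * (2:ℝ) ^ (u * a) * δ) ≤ δ / L :=
  calc (2:ℝ) ^ (u * -a) * min x (L⁻¹ * (2:ℝ) ^ (u * a) * δ)
      ≤ (2:ℝ) ^ (u * -a) * (L⁻¹ * (2:ℝ) ^ (u * a) * δ) := by
        gcongr; exact min_le_right _ _
    _ = δ / L := by
      rw [mul_neg, Real.rpow_neg zero_le_two, div_eq_inv_mul,
        show ∀ y : ℝ, y⁻¹ * (L⁻¹ * y * δ) = y⁻¹ * y * (L⁻¹ * δ) from fun y => by ring,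
        inv_mul_cancel₀ (by positivity), one_mul]

end Crossover

theorem stmt16_general {Λ : ℕ → Type*} [∀ j, Fintype (Λ j)]
    (d : ℕ) (CΛ : ℝ) (hCΛ : 1 ≤ CΛ)
    (hcard : ∀ j : ℕ, 2 ^ (j * d) ≤ Fintype.card (Λ j) ∧
      (Fintype.card (Λ j) : ℝ) ≤ CΛ * 2 ^ (j * d))
    (p q : ℝ≥0∞) (hp1 : 1 ≤ p) (hp2 : p ≤ 2) (hq1 : 1 ≤ q)
    (a s L₂ ϱ δ : ℝ) (ha : 0 < a) (hs : 0 < s) (hL₂ : 0 < L₂) (hϱ : 0 < ϱ)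
    (hδ : 0 < δ) (hδϱ : δ < ϱ * L₂)
    (β : ℕ → ℝ)
    (hβ : ∀ j : ℕ, β j = CΛ⁻¹ * (2:ℝ) ^ (-((j:ℝ) * d) / 2) *
      min ((2:ℝ) ^ (-(j:ℝ) * s) * ϱ) (L₂⁻¹ * (2:ℝ) ^ ((j:ℝ) * a) * δ))
    (f : ℕ → ∀ n, Λ n → ℝ)
    (hf : ∀ (j n : ℕ) (k : Λ n), f j n k = if n = j then β j else 0) :
    (∀ j : ℕ,
      besovNormE d s p q (f j) ≤ ENNReal.ofReal ϱ ∧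
      besovNormE d (-a) 2 1 (f j) ≤ ENNReal.ofReal (δ / L₂) ∧
      ENNReal.ofReal (CΛ⁻¹ *
          min ((2:ℝ) ^ (-(j:ℝ) * s) * ϱ) (L₂⁻¹ * (2:ℝ) ^ ((j:ℝ) * a) * δ)) ≤
        besovNormE d 0 p 1 (f j)) ∧
    ENNReal.ofReal (CΛ⁻¹ * (2:ℝ) ^ (-s) * L₂ ^ (-(s / (s + a))) *
        ϱ ^ (a / (s + a)) * δ ^ (s / (s + a))) ≤
      ⨆ j : ℕ, besovNormE d 0 p 1 (f j) := by
  set m : ℕ → ℝ := fun j =>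
    min ((2:ℝ) ^ (-(j:ℝ) * s) * ϱ) (L₂⁻¹ * (2:ℝ) ^ ((j:ℝ) * a) * δ)
  have hm : ∀ j, 0 ≤ m j := fun j => le_min (by positivity) (by positivity)
  have hb : ∀ j, 0 ≤ CΛ⁻¹ * m j := fun j => mul_nonneg (by positivity) (hm j)
  have hp : p ≠ ∞ := ne_top_of_le_ne_top ofNat_ne_top hp2
  have hfj : ∀ j n (k : Λ n),
      f j n k = if n = j then (2:ℝ) ^ (-((j:ℝ) * d) / 2) * (CΛ⁻¹ * m j) else 0 :=
    fun j n k => by rw [hf, hβ, ← mul_assoc, mul_comm _ CΛ⁻¹]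
  have hlower : ∀ j, ENNReal.ofReal (CΛ⁻¹ * m j) ≤ besovNormE d 0 p 1 (f j) := fun j => by
    simpa using le_besovNormE_of_level (t := 0) (one_pos.trans_le hp1).ne' hp one_ne_zero
      (hcard j).1 (hb j) (hfj j)
  have hupper : ∀ (j : ℕ) (t : ℝ) (r r' : ℝ≥0∞), 1 ≤ r → r ≠ ∞ → 1 ≤ r' →
      besovNormE d t r r' (f j) ≤ ENNReal.ofReal ((2:ℝ) ^ ((j:ℝ) * t) * m j) := by
    intro j t r r' hr1 hr hr'
    rw [← mul_inv_cancel_left₀ (one_pos.trans_le hCΛ).ne' (m j)]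
    exact besovNormE_le_of_level hr1 hr (one_pos.trans_le hr').ne' (hcard j).1 (hcard j).2
      (hb j) (hfj j)
  refine ⟨fun j => ⟨?_, ?_, hlower j⟩, ?_⟩
  · exact (hupper j s p q hp1 hp hq1).trans
      (ENNReal.ofReal_le_ofReal (two_rpow_mul_min_le_left _ _ _ _))
  · exact (hupper j (-a) 2 1 one_le_two ofNat_ne_top le_rfl).trans
      (ENNReal.ofReal_le_ofReal (two_rpow_mul_neg_mul_min_le_right _ _ _ _ _))
  · obtain ⟨j, hj⟩ := exists_le_min_two_rpow hs ha.le hL₂ hϱ hδ hδϱ.le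
    refine le_trans ?_ ((hlower j).trans (le_iSup (fun j => besovNormE d 0 p 1 (f j)) j))
    refine ENNReal.ofReal_le_ofReal ?_
    calc CΛ⁻¹ * (2:ℝ) ^ (-s) * L₂ ^ (-(s / (s + a))) * ϱ ^ (a / (s + a)) *
          δ ^ (s / (s + a))
        = CΛ⁻¹ * ((2:ℝ) ^ (-s) * (L₂ ^ (-(s / (s + a))) * ϱ ^ (a / (s + a)) *
            δ ^ (s / (s + a)))) := by ring
      _ ≤ CΛ⁻¹ * m j := by gcongr

/-- lower bound construction: single-level block sequences f_j with
constant coordinates β realize ‖f_j‖_{s,p,q} ≤ ϱ, ‖f_j‖_{−a,2,1} ≤ δ/L₂ and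
‖f_j‖_{0,p,1} ≥ C_Λ⁻¹ min{2^{−js}ϱ, L₂⁻¹2^{ja}δ}, whence
sup_j ‖f_j‖_{0,p,1} ≥ C_Λ⁻¹ 2^{−s} L₂^{−s/(s+a)} ϱ^{a/(s+a)} δ^{s/(s+a)}. -/
theorem stmt16 {Λ : ℕ → Type*} [∀ j, Fintype (Λ j)]
    (d : ℕ) (hd : 1 ≤ d) (CΛ : ℝ) (hCΛ : 1 ≤ CΛ)
    (hcard : ∀ j : ℕ, 2 ^ (j * d) ≤ Fintype.card (Λ j) ∧
      (Fintype.card (Λ j) : ℝ) ≤ CΛ * 2 ^ (j * d))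
    (p q : ℝ≥0∞) (hp1 : 1 ≤ p) (hp2 : p ≤ 2) (hq1 : 1 ≤ q)
    (a s L₂ ϱ δ : ℝ) (ha : 0 < a) (hs : 0 < s) (hL₂ : 0 < L₂) (hϱ : 0 < ϱ)
    (hδ : 0 < δ) (hδϱ : δ < ϱ * L₂)
    (β : ℕ → ℝ)
    (hβ : ∀ j : ℕ, β j = CΛ⁻¹ * (2:ℝ) ^ (-((j:ℝ) * d) / 2) *
      min ((2:ℝ) ^ (-(j:ℝ) * s) * ϱ) (L₂⁻¹ * (2:ℝ) ^ ((j:ℝ) * a) * δ))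
    (f : ℕ → ∀ n, Λ n → ℝ)
    (hf : ∀ (j n : ℕ) (k : Λ n), f j n k = if n = j then β j else 0) :
    (∀ j : ℕ,
      besovNormE d s p q (f j) ≤ ENNReal.ofReal ϱ ∧
      besovNormE d (-a) 2 1 (f j) ≤ ENNReal.ofReal (δ / L₂) ∧
      ENNReal.ofReal (CΛ⁻¹ *
          min ((2:ℝ) ^ (-(j:ℝ) * s) * ϱ) (L₂⁻¹ * (2:ℝ) ^ ((j:ℝ) * a) * δ)) ≤
        besovNormE d 0 p 1 (f j)) ∧
    ENNReal.ofReal (CΛ⁻¹ * (2:ℝ) ^ (-s) * L₂ ^ (-(s / (s + a))) *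
        ϱ ^ (a / (s + a)) * δ ^ (s / (s + a))) ≤
      ⨆ j : ℕ, besovNormE d 0 p 1 (f j) :=
  stmt16_general d CΛ hCΛ hcard p q hp1 hp2 hq1 a s L₂ ϱ δ ha hs hL₂ hϱ hδ hδϱ β hβ f hf
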